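/- If (G, S) and (H, R) are non-redundant rooted multigraphs (i.e., admitting no non-trivial non-edge-collapsing graph equivalence relation), then their unfolding trees T(G, S) and T(H, R) are rooted-isomorphic if and only if (G, S) and (H, R) are rooted-isomorphic. -/

import Mathlib

/-- A directed multigraph: vertices, edges, origin and terminus maps. -/
structure Multigraph where
  V : Type
  E : Type
  o : E → V
  t : E → V

namespace Multigraph

/-- Graph homomorphism. -/
structure Hom (G H : Multigraph) where
  onV : G.V → H.V
  onE : G.E → H.E
  map_o : ∀ e, H.o (onE e) = onV (G.o e)
  map_t : ∀ e, H.t (onE e) = onV (G.t e)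

/-- Graph isomorphism. -/
structure Iso (G H : Multigraph) extends Hom G H where
  bijV : Function.Bijective onV
  bijE : Function.Bijective onE

/-- Rooted isomorphism of rooted multigraphs. -/
def RootedIso (G : Multigraph) (S : G.V) (H : Multigraph) (R : H.V) : Prop :=
  ∃ φ : Iso G H, φ.onV S = R

/-- Outgoing edge neighbourhood of a vertex. -/
def Eo (G : Multigraph) (v : G.V) : Set G.E := {e | G.o e = v}

/-- Incoming edge neighbourhood of a vertex. -/
def Et (G : Multigraph) (v : G.V) : Set G.E := {e | G.t e = v}

/-- A graph equivalence relation: compatible equivalences on vertices and edges. -/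
structure GraphEquiv (G : Multigraph) where
  rV : G.V → G.V → Prop
  rE : G.E → G.E → Prop
  equivV : Equivalence rV
  equivE : Equivalence rE
  compat_o : ∀ e f, rE e f → rV (G.o e) (G.o f)
  compat_t : ∀ e f, rE e f → rV (G.t e) (G.t f)

/-- Non-edge-collapsing graph equivalence relation. -/
def GraphEquiv.NonEdgeCollapsing {G : Multigraph} (s : GraphEquiv G) : Prop :=
  ∀ v v', s.rV v v' → ∀ e, G.o e = v → ∃! e', G.o e' = v' ∧ s.rE e e'

/-- Quotient graph by a graph equivalence relation. -/
def GraphEquiv.quot {G : Multigraph} (s : GraphEquiv G) : Multigraph where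
  V := Quot s.rV
  E := Quot s.rE
  o := Quot.lift (fun e => Quot.mk s.rV (G.o e)) (fun e f h => Quot.sound (s.compat_o e f h))
  t := Quot.lift (fun e => Quot.mk s.rV (G.t e)) (fun e f h => Quot.sound (s.compat_t e f h))

/-- A graph is non-redundant if its only non-edge-collapsing equivalence relation is trivial. -/
def NonRedundant (G : Multigraph) : Prop :=
  ∀ s : GraphEquiv G, s.NonEdgeCollapsing →
    (∀ v w, s.rV v w → v = w) ∧ (∀ e f, s.rE e f → e = f)

/-- Directed walks in `G` starting at `S`, indexed by the terminus. -/
inductive Walk (G : Multigraph) (S : G.V) : G.V → Type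
  | nil : Walk G S S
  | snoc {v : G.V} (w : Walk G S v) (e : G.E) (h : G.o e = v) : Walk G S (G.t e)

/-- Length of a walk. -/
def Walk.length {G : Multigraph} {S : G.V} : ∀ {v : G.V}, Walk G S v → ℕ
  | _, .nil => 0
  | _, .snoc w _ _ => w.length + 1

/-- Reachability by a directed walk. -/
def Reaches (G : Multigraph) (x y : G.V) : Prop := Nonempty (Walk G x y)

/-- `S` is a root: every vertex is reachable from `S`. -/
def IsRoot (G : Multigraph) (S : G.V) : Prop := ∀ v, Reaches G S v

/-- No two edges share a terminus. -/
def NoClashes (G : Multigraph) : Prop := ∀ e f : G.E, G.t e = G.t f → e = f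

/-- No non-empty closed walks. -/
def Acyclic (G : Multigraph) : Prop := ∀ v : G.V, ∀ w : Walk G v v, w.length = 0

/-- The outgoing subgraph `G_x`: induced on the vertices reachable from `x`. -/
def outGraph (G : Multigraph) (x : G.V) : Multigraph where
  V := {y : G.V // Reaches G x y}
  E := {e : G.E // Reaches G x (G.o e)}
  o := fun e => ⟨G.o e.1, e.2⟩
  t := fun e => ⟨G.t e.1, e.2.elim fun w => ⟨w.snoc e.1 rfl⟩⟩

/-- The natural root of `G_x`. -/
def rootOut (G : Multigraph) (x : G.V) : (outGraph G x).V := ⟨x, ⟨Walk.nil⟩⟩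

/-- o-equivalence of vertices: rooted isomorphism of their outgoing graphs. -/
def OEquiv (G : Multigraph) (v w : G.V) : Prop :=
  RootedIso (outGraph G v) (rootOut G v) (outGraph G w) (rootOut G w)

/-- Walks starting at `S` (with arbitrary terminus). -/
abbrev WalkFrom (G : Multigraph) (S : G.V) : Type := Σ v : G.V, Walk G S v

/-- Terminus of a walk. -/
def term {G : Multigraph} {S : G.V} (w : WalkFrom G S) : G.V := w.1

/-- The unfolding tree `T(G, S)`: vertices are walks from `S`, edges are one-step extensions. -/
def unfoldTree (G : Multigraph) (S : G.V) : Multigraph where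
  V := WalkFrom G S
  E := Σ v : G.V, Walk G S v × {e : G.E // G.o e = v}
  o := fun x => ⟨x.1, x.2.1⟩
  t := fun x => ⟨G.t x.2.2.1, x.2.1.snoc x.2.2.1 x.2.2.2⟩

/-- The empty walk at `S`, root of the unfolding tree. -/
def nilWalk (G : Multigraph) (S : G.V) : WalkFrom G S := ⟨S, Walk.nil⟩

/-- Prefix order on walks from `S`. -/
inductive IsPrefix (G : Multigraph) (S : G.V) : WalkFrom G S → WalkFrom G S → Prop
  | refl (w : WalkFrom G S) : IsPrefix G S w w
  | snoc {w : WalkFrom G S} {v : G.V} (u : Walk G S v) (e : G.E) (h : G.o e = v) :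
      IsPrefix G S w ⟨v, u⟩ → IsPrefix G S w ⟨G.t e, u.snoc e h⟩

/-- The half-tree of the unfolding tree rooted at the walk `w`. -/
def halfTree (G : Multigraph) (S : G.V) (w : WalkFrom G S) : Multigraph where
  V := {u : WalkFrom G S // IsPrefix G S w u}
  E := {x : Σ v : G.V, Walk G S v × {e : G.E // G.o e = v} // IsPrefix G S w ⟨x.1, x.2.1⟩}
  o := fun x => ⟨⟨x.1.1, x.1.2.1⟩, x.2⟩
  t := fun x => ⟨⟨G.t x.1.2.2.1, x.1.2.1.snoc x.1.2.2.1 x.1.2.2.2⟩,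
    IsPrefix.snoc x.1.2.1 x.1.2.2.1 x.1.2.2.2 x.2⟩

/-- A subspace of the unfolding tree: a set of walks closed under extension. -/
def IsSubspace (G : Multigraph) (S : G.V) (𝒮 : Set (WalkFrom G S)) : Prop :=
  ∀ w ∈ 𝒮, ∀ w', IsPrefix G S w w' → w' ∈ 𝒮

/-- An inescapable subspace: every walk extends into it. -/
def Inescapable (G : Multigraph) (S : G.V) (𝒮 : Set (WalkFrom G S)) : Prop :=
  ∀ w : WalkFrom G S, ∃ u ∈ 𝒮, IsPrefix G S w u

/-- A cofinite subspace: a finite union of half-trees. -/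
def CofiniteSubspace (G : Multigraph) (S : G.V) (𝒮 : Set (WalkFrom G S)) : Prop :=
  ∃ F : Set (WalkFrom G S), F.Finite ∧ 𝒮 = {u | ∃ x ∈ F, IsPrefix G S x u}

/-- `B` is a basis of the subspace `𝒮`: a prefix-antichain in `𝒮` such that every
walk in `𝒮` has a prefix in `B`. -/
def IsBasis (G : Multigraph) (S : G.V) (𝒮 B : Set (WalkFrom G S)) : Prop :=
  B ⊆ 𝒮 ∧ (∀ b ∈ B, ∀ b' ∈ B, IsPrefix G S b b' → b = b') ∧
    ∀ w ∈ 𝒮, ∃ b ∈ B, IsPrefix G S b w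

/-- Deleting a set of edges from a graph (also removing vertices all of whose
incident edges are deleted). -/
def deleteEdges (G : Multigraph) (F : Set G.E) : Multigraph where
  V := {v : G.V // ¬((∃ e, G.o e = v ∨ G.t e = v) ∧ ∀ e, (G.o e = v ∨ G.t e = v) → e ∈ F)}
  E := {e : G.E // e ∉ F}
  o := fun e => ⟨G.o e.1, fun h => e.2 (h.2 e.1 (Or.inl rfl))⟩
  t := fun e => ⟨G.t e.1, fun h => e.2 (h.2 e.1 (Or.inr rfl))⟩

/-- Two trees are almost isomorphic: after removing finite subtrees (given by their
finite edge sets), the remainders are isomorphic. -/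
def AlmostIso (T1 T2 : Multigraph) : Prop :=
  ∃ F1 : Set T1.E, F1.Finite ∧ ∃ F2 : Set T2.E, F2.Finite ∧
    Nonempty (Iso (deleteEdges T1 F1) (deleteEdges T2 F2))

open scoped Classical in
/-- The multiset of termini of the outgoing edges of `v`. -/
noncomputable def outSum (G : Multigraph) [Fintype G.E] (v : G.V) : Multiset G.V :=
  ∑ e ∈ Finset.univ.filter (fun e => G.o e = v), ({G.t e} : Multiset G.V)

/-- The defining relations of the graph monoid: `v = Σ_{e ∈ E_o(v)} t(e)` for non-sinks. -/
def monoidRel (G : Multigraph) [Fintype G.E] : Multiset G.V → Multiset G.V → Prop :=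
  fun s u => ∃ v : G.V, (∃ e, G.o e = v) ∧ s = {v} ∧ u = outSum G v

/-- Equality in the graph monoid `M(G)`: the additive congruence generated by the
graph relations on the free commutative monoid `Multiset G.V`. -/
def monoidEq (G : Multigraph) [Fintype G.E] (s u : Multiset G.V) : Prop :=
  addConGen (monoidRel G) s u

/-- A robustly rooted graph: it has a root, and every root has an out-neighbour that
is again a root. -/
def RobustlyRooted (G : Multigraph) : Prop :=
  (∃ S, IsRoot G S) ∧ ∀ v, IsRoot G v → ∃ e, G.o e = v ∧ IsRoot G (G.t e)

/-- The two-vertex multigraph with adjacency matrix `(A B; C D)`;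
`false` is the vertex `x`, `true` is the vertex `y`. -/
def twoVertexGraph (A B C D : ℕ) : Multigraph where
  V := Bool
  E := (Fin A ⊕ Fin B) ⊕ (Fin C ⊕ Fin D)
  o := fun e => match e with | .inl _ => false | .inr _ => true
  t := fun e => match e with
    | .inl (.inl _) => false
    | .inl (.inr _) => true
    | .inr (.inl _) => false
    | .inr (.inr _) => true

instance (A B C D : ℕ) : Fintype (twoVertexGraph A B C D).E :=
  inferInstanceAs (Fintype ((Fin A ⊕ Fin B) ⊕ (Fin C ⊕ Fin D)))

/-!
Relate the terminus of every walk `p` from `S` to the terminus of `Φ p`, for a rooted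
isomorphism `Φ : T(G, S) ≅ T(H, R)`. Since `Φ` maps the out-edges of `p` bijectively onto those
of `Φ p`, this relation is a bisimulation. Bisimilarity on a single graph is an equivalence, and
matching the out-edges of each vertex with those of a fixed representative of its class refines
it to a non-edge-collapsing graph equivalence; so in a non-redundant graph bisimilar vertices are
equal. Applied in `G` and in `H`, this makes the relation the graph of a bijection `G.V ≃ H.V`,
and the out-edge bijections glue to an isomorphism `G ≅ H`. The converse maps walks along the
isomorphism.
-/

def IsBisim (G H : Multigraph) (ρ : G.V → H.V → Prop) : Prop :=
  ∀ v w, ρ v w → ∃ σ : {e : G.E // G.o e = v} ≃ {h : H.E // H.o h = w},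
    ∀ e, ρ (G.t e.1) (H.t (σ e).1)

def Bisimilar (G H : Multigraph) (v : G.V) (w : H.V) : Prop :=
  ∃ ρ, IsBisim G H ρ ∧ ρ v w

section Bisimilar

variable {G H K : Multigraph}

theorem isBisim_bisimilar : IsBisim G H (Bisimilar G H) := by
  rintro v w ⟨ρ, hρ, hvw⟩
  obtain ⟨σ, hσ⟩ := hρ v w hvw
  exact ⟨σ, fun e => ⟨ρ, hρ, hσ e⟩⟩

theorem Bisimilar.refl (v : G.V) : Bisimilar G G v v := by
  refine ⟨Eq, ?_, rfl⟩
  rintro v _ rfl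
  exact ⟨Equiv.refl _, fun _ => rfl⟩

theorem Bisimilar.symm {v : G.V} {w : H.V} (h : Bisimilar G H v w) :
    Bisimilar H G w v := by
  obtain ⟨ρ, hρ, hvw⟩ := h
  refine ⟨fun w v => ρ v w, fun w v hwv => ?_, hvw⟩
  obtain ⟨σ, hσ⟩ := hρ v w hwv
  refine ⟨σ.symm, fun h => ?_⟩
  simpa using hσ (σ.symm h)

theorem Bisimilar.trans {u : G.V} {v : H.V} {w : K.V}
    (huv : Bisimilar G H u v) (hvw : Bisimilar H K v w) : Bisimilar G K u w := by
  obtain ⟨ρ, hρ, huv⟩ := huv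
  obtain ⟨ρ', hρ', hvw⟩ := hvw
  refine ⟨fun u w => ∃ v, ρ u v ∧ ρ' v w, ?_, v, huv, hvw⟩
  rintro u w ⟨v, huv, hvw⟩
  obtain ⟨σ, hσ⟩ := hρ u v huv
  obtain ⟨σ', hσ'⟩ := hρ' v w hvw
  exact ⟨σ.trans σ', fun e => ⟨_, hσ e, hσ' (σ e)⟩⟩

end Bisimilar

namespace Bisimilar

variable (G : Multigraph)

def setoid : Setoid G.V := ⟨Bisimilar G G, ⟨Bisimilar.refl, Bisimilar.symm, Bisimilar.trans⟩⟩

variable {G}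

noncomputable def rep (v : G.V) : G.V := (Quotient.mk (setoid G) v).out

theorem rep_bisimilar (v : G.V) : Bisimilar G G (rep v) v := Quotient.mk_out (s := setoid G) v

theorem rep_eq_rep_iff {v w : G.V} : rep v = rep w ↔ Bisimilar G G v w :=
  Quotient.out_inj.trans Quotient.eq

noncomputable def repOutEquiv (v : G.V) : {e : G.E // G.o e = rep v} ≃ {e : G.E // G.o e = v} :=
  (isBisim_bisimilar _ _ (rep_bisimilar v)).choose

theorem bisimilar_t_repOutEquiv (v : G.V) (e : {e : G.E // G.o e = rep v}) :
    Bisimilar G G (G.t e.1) (G.t (repOutEquiv v e).1) :=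
  (isBisim_bisimilar _ _ (rep_bisimilar v)).choose_spec e

/-- Edges are identified when they correspond to the same edge out of the class representative;
a fixed bijection per vertex is what makes the identification non-edge-collapsing. -/
noncomputable def edgeType (e : G.E) : G.E := ((repOutEquiv (G.o e)).symm ⟨e, rfl⟩).1

theorem edgeType_eq {e : G.E} {v : G.V} (h : G.o e = v) :
    edgeType e = ((repOutEquiv v).symm ⟨e, h⟩).1 := by
  subst h; rfl

theorem o_edgeType (e : G.E) : G.o (edgeType e) = rep (G.o e) :=
  ((repOutEquiv (G.o e)).symm ⟨e, rfl⟩).2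

theorem bisimilar_t_edgeType (e : G.E) : Bisimilar G G (G.t (edgeType e)) (G.t e) := by
  have h := bisimilar_t_repOutEquiv (G.o e) ((repOutEquiv (G.o e)).symm ⟨e, rfl⟩)
  rwa [Equiv.apply_symm_apply] at h

variable (G)

noncomputable def graphEquiv : GraphEquiv G where
  rV := Bisimilar G G
  rE e f := edgeType e = edgeType f
  equivV := (setoid G).iseqv
  equivE := ⟨fun _ => rfl, Eq.symm, Eq.trans⟩
  compat_o e f h := rep_eq_rep_iff.1 <| by rw [← o_edgeType, ← o_edgeType, h]
  compat_t e f h :=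
    ((bisimilar_t_edgeType e).symm.trans (h ▸ Bisimilar.refl _)).trans (bisimilar_t_edgeType f)

theorem graphEquiv_nonEdgeCollapsing : (graphEquiv G).NonEdgeCollapsing := by
  rintro v v' hv e rfl
  have hrep : G.o (edgeType e) = rep v' := (o_edgeType e).trans (rep_eq_rep_iff.2 hv)
  set e' := repOutEquiv v' ⟨edgeType e, hrep⟩
  refine ⟨e'.1, ⟨e'.2, ?_⟩, ?_⟩
  · change edgeType e = edgeType e'.1
    rw [edgeType_eq e'.2]
    simp [e']
  · rintro f ⟨hf, hfe⟩
    change edgeType e = edgeType f at hfe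
    rw [edgeType_eq hf] at hfe
    have : (repOutEquiv v').symm ⟨f, hf⟩ = ⟨edgeType e, hrep⟩ := Subtype.ext hfe.symm
    simp only [e', ← this, Equiv.apply_symm_apply]

end Bisimilar

theorem NonRedundant.eq_of_bisimilar {G : Multigraph} (hG : NonRedundant G) {v w : G.V}
    (h : Bisimilar G G v w) : v = w :=
  (hG _ (Bisimilar.graphEquiv_nonEdgeCollapsing G)).1 v w h

section Iso

variable {G H : Multigraph}

def edgeEquivOfOutEquiv (f : G.V ≃ H.V)
    (σ : ∀ v, {e : G.E // G.o e = v} ≃ {h : H.E // H.o h = f v}) : G.E ≃ H.E :=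
  (Equiv.sigmaFiberEquiv G.o).symm.trans
    ((Equiv.sigmaCongr f σ).trans (Equiv.sigmaFiberEquiv H.o))

def Iso.ofOutEquiv (f : G.V ≃ H.V)
    (σ : ∀ v, {e : G.E // G.o e = v} ≃ {h : H.E // H.o h = f v})
    (hσ : ∀ v e, H.t (σ v e).1 = f (G.t e.1)) : Iso G H where
  onV := f
  onE := edgeEquivOfOutEquiv f σ
  map_o e := (σ (G.o e) ⟨e, rfl⟩).2
  map_t e := hσ (G.o e) ⟨e, rfl⟩
  bijV := f.bijective
  bijE := (edgeEquivOfOutEquiv f σ).bijective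

noncomputable def Iso.symm (φ : Iso G H) : Iso H G :=
  let fV := Equiv.ofBijective _ φ.bijV
  let fE := Equiv.ofBijective _ φ.bijE
  { onV := fV.symm
    onE := fE.symm
    map_o := fun h => fV.injective <| by
      simp only [fV, fE, Equiv.ofBijective_apply, ← φ.map_o, Equiv.ofBijective_apply_symm_apply]
    map_t := fun h => fV.injective <| by
      simp only [fV, fE, Equiv.ofBijective_apply, ← φ.map_t, Equiv.ofBijective_apply_symm_apply]
    bijV := fV.symm.bijective
    bijE := fE.symm.bijective }

@[simp] theorem Iso.symm_onV_onV (φ : Iso G H) (v : G.V) : φ.symm.onV (φ.onV v) = v :=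
  (Equiv.ofBijective _ φ.bijV).symm_apply_apply v

@[simp] theorem Iso.symm_onE_onE (φ : Iso G H) (e : G.E) : φ.symm.onE (φ.onE e) = e :=
  (Equiv.ofBijective _ φ.bijE).symm_apply_apply e

@[simp] theorem Iso.onE_symm_onE (φ : Iso G H) (h : H.E) : φ.onE (φ.symm.onE h) = h :=
  (Equiv.ofBijective _ φ.bijE).apply_symm_apply h

noncomputable def Iso.outEquiv (φ : Iso G H) (v : G.V) :
    {e : G.E // G.o e = v} ≃ {h : H.E // H.o h = φ.onV v} :=
  Equiv.subtypeEquiv (Equiv.ofBijective _ φ.bijE) fun e => by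
    simp only [Equiv.ofBijective_apply, φ.map_o, φ.bijV.injective.eq_iff]

end Iso

section UnfoldTree

variable {G : Multigraph} {S : G.V}

def WalkFrom.snoc (p : WalkFrom G S) (e : G.E) (h : G.o e = p.1) : WalkFrom G S :=
  ⟨G.t e, p.2.snoc e h⟩

theorem WalkFrom.snoc_congr {p q : WalkFrom G S} (hpq : p = q) {e f : G.E} (hef : e = f)
    (he : G.o e = p.1) (hf : G.o f = q.1) : p.snoc e he = q.snoc f hf := by
  subst hpq hef; rfl

def unfoldTree.edge (p : WalkFrom G S) (e : G.E) (h : G.o e = p.1) : (unfoldTree G S).E :=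
  ⟨p.1, p.2, ⟨e, h⟩⟩

theorem unfoldTree.edge_congr {p q : WalkFrom G S} (hpq : p = q) {e f : G.E} (hef : e = f)
    (he : G.o e = p.1) (hf : G.o f = q.1) : edge p e he = edge q f hf := by
  subst hpq hef; rfl

def unfoldTree.outEdgesEquiv (p : WalkFrom G S) :
    {x : (unfoldTree G S).E // (unfoldTree G S).o x = p} ≃ {e : G.E // G.o e = p.1} where
  toFun x := ⟨x.1.2.2.1, x.1.2.2.2.trans (congrArg Sigma.fst x.2)⟩
  invFun e := ⟨edge p e.1 e.2, rfl⟩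
  left_inv := by rintro ⟨⟨v, w, e⟩, rfl⟩; rfl
  right_inv _ := rfl

theorem unfoldTree.t_eq_snoc {p : WalkFrom G S}
    (x : {x : (unfoldTree G S).E // (unfoldTree G S).o x = p}) :
    (unfoldTree G S).t x.1 = p.snoc (outEdgesEquiv p x).1 (outEdgesEquiv p x).2 := by
  obtain ⟨⟨v, w, e⟩, rfl⟩ := x; rfl

variable {H : Multigraph} {R : H.V} (Φ : Iso (unfoldTree G S) (unfoldTree H R))

noncomputable def treeOutEquiv (p : WalkFrom G S) :
    {e : G.E // G.o e = p.1} ≃ {h : H.E // H.o h = (Φ.onV p).1} :=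
  (unfoldTree.outEdgesEquiv p).symm.trans <|
    (Φ.outEquiv p).trans (unfoldTree.outEdgesEquiv (Φ.onV p))

theorem onV_snoc (p : WalkFrom G S) (e : {e : G.E // G.o e = p.1}) :
    Φ.onV (p.snoc e.1 e.2) =
      (Φ.onV p).snoc (treeOutEquiv Φ p e).1 (treeOutEquiv Φ p e).2 :=
  (Φ.map_t _).symm.trans
    (unfoldTree.t_eq_snoc (Φ.outEquiv p ((unfoldTree.outEdgesEquiv p).symm e)))

theorem isBisim_term_onV :
    IsBisim G H fun v w => ∃ p : WalkFrom G S, p.1 = v ∧ (Φ.onV p).1 = w := by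
  rintro _ _ ⟨p, rfl, rfl⟩
  exact ⟨treeOutEquiv Φ p, fun e => ⟨p.snoc e.1 e.2, rfl, by rw [onV_snoc]; rfl⟩⟩

theorem bisimilar_term_onV (p : WalkFrom G S) : Bisimilar G H p.1 (Φ.onV p).1 :=
  ⟨_, isBisim_term_onV Φ, p, rfl, rfl⟩

theorem term_onV_eq_term_onV_iff (hG : NonRedundant G) (hH : NonRedundant H)
    {p q : WalkFrom G S} : (Φ.onV p).1 = (Φ.onV q).1 ↔ p.1 = q.1 := by
  constructor
  · intro h
    refine hG.eq_of_bisimilar ((bisimilar_term_onV Φ p).trans ?_)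
    exact h ▸ (bisimilar_term_onV Φ q).symm
  · intro h
    refine hH.eq_of_bisimilar ((bisimilar_term_onV Φ p).symm.trans ?_)
    exact h ▸ bisimilar_term_onV Φ q

end UnfoldTree

theorem rootedIso_of_rootedIso_unfoldTree {G : Multigraph} {S : G.V} {H : Multigraph} {R : H.V}
    (hS : IsRoot G S) (hR : IsRoot H R) (hG : NonRedundant G) (hH : NonRedundant H)
    (hT : RootedIso (unfoldTree G S) (nilWalk G S) (unfoldTree H R) (nilWalk H R)) :
    RootedIso G S H R := by
  obtain ⟨Φ, hΦ⟩ := hT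
  let walkTo : G.V → WalkFrom G S := fun v => ⟨v, (hS v).some⟩
  let f : G.V → H.V := fun v => (Φ.onV (walkTo v)).1
  have hf : ∀ p, f p.1 = (Φ.onV p).1 := fun p => (term_onV_eq_term_onV_iff Φ hG hH).2 rfl
  have hbij : Function.Bijective f := by
    refine ⟨fun v w h => (term_onV_eq_term_onV_iff Φ hG hH).1 h, fun w => ?_⟩
    obtain ⟨p, hp⟩ := Φ.bijV.2 ⟨w, (hR w).some⟩
    exact ⟨p.1, (hf p).trans (congrArg Sigma.fst hp)⟩
  refine ⟨Iso.ofOutEquiv (Equiv.ofBijective f hbij) (fun v => treeOutEquiv Φ (walkTo v))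
    (fun v e => ?_), ?_⟩
  · exact (congrArg Sigma.fst (onV_snoc Φ (walkTo v) e)).symm.trans (hf _).symm
  · exact (hf (nilWalk G S)).trans (congrArg Sigma.fst hΦ)

section MapWalk

variable {G H : Multigraph} {S : G.V} {R : H.V}

/-- The image of a walk under a homomorphism; its terminus is recorded in a subtype rather than
in the index, which would need a cast along `φ.map_t`. -/
def Hom.mapWalk (φ : Hom G H) (hS : φ.onV S = R) :
    ∀ {v : G.V}, Walk G S v → {q : WalkFrom H R // q.1 = φ.onV v}
  | _, .nil => ⟨⟨R, .nil⟩, hS.symm⟩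
  | _, .snoc w e he =>
    ⟨(φ.mapWalk hS w).1.snoc (φ.onE e) (by rw [φ.map_o, he]; exact (φ.mapWalk hS w).2.symm),
      φ.map_t e⟩

theorem Hom.mapWalk_mapWalk (φ : Hom G H) (ψ : Hom H G) (hS : φ.onV S = R)
    (hR : ψ.onV R = S) (hE : ∀ e, ψ.onE (φ.onE e) = e) {v : G.V} (w : Walk G S v) :
    (ψ.mapWalk hR (φ.mapWalk hS w).1.2).1 = ⟨v, w⟩ := by
  induction w with
  | nil => rfl
  | snoc w e he ih => exact WalkFrom.snoc_congr ih (hE e) _ _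

def Hom.mapUnfoldTree (φ : Hom G H) (hS : φ.onV S = R) :
    Hom (unfoldTree G S) (unfoldTree H R) where
  onV p := (φ.mapWalk hS p.2).1
  onE x := unfoldTree.edge (φ.mapWalk hS x.2.1).1 (φ.onE x.2.2.1)
    (by rw [φ.map_o, x.2.2.2]; exact (φ.mapWalk hS x.2.1).2.symm)
  map_o _ := rfl
  map_t _ := rfl

theorem Hom.mapUnfoldTree_onV_onV (φ : Hom G H) (ψ : Hom H G) (hS : φ.onV S = R)
    (hR : ψ.onV R = S) (hE : ∀ e, ψ.onE (φ.onE e) = e) (p : WalkFrom G S) :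
    (ψ.mapUnfoldTree hR).onV ((φ.mapUnfoldTree hS).onV p) = p :=
  φ.mapWalk_mapWalk ψ hS hR hE p.2

theorem Hom.mapUnfoldTree_onE_onE (φ : Hom G H) (ψ : Hom H G) (hS : φ.onV S = R)
    (hR : ψ.onV R = S) (hE : ∀ e, ψ.onE (φ.onE e) = e) (x : (unfoldTree G S).E) :
    (ψ.mapUnfoldTree hR).onE ((φ.mapUnfoldTree hS).onE x) = x := by
  obtain ⟨_, w, e, he⟩ := x
  exact unfoldTree.edge_congr (φ.mapWalk_mapWalk ψ hS hR hE w) (hE e) _ he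

end MapWalk

theorem rootedIso_unfoldTree_of_rootedIso {G : Multigraph} {S : G.V} {H : Multigraph} {R : H.V}
    (h : RootedIso G S H R) :
    RootedIso (unfoldTree G S) (nilWalk G S) (unfoldTree H R) (nilWalk H R) := by
  obtain ⟨φ, hS⟩ := h
  have hR : φ.symm.onV R = S := by rw [← hS, Iso.symm_onV_onV]
  refine ⟨⟨φ.mapUnfoldTree hS, ?_, ?_⟩, rfl⟩
  · exact Function.bijective_iff_has_inverse.2 ⟨(φ.symm.mapUnfoldTree hR).onV,
      Hom.mapUnfoldTree_onV_onV _ _ hS hR φ.symm_onE_onE,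
      Hom.mapUnfoldTree_onV_onV _ _ hR hS φ.onE_symm_onE⟩
  · exact Function.bijective_iff_has_inverse.2 ⟨(φ.symm.mapUnfoldTree hR).onE,
      Hom.mapUnfoldTree_onE_onE _ _ hS hR φ.symm_onE_onE,
      Hom.mapUnfoldTree_onE_onE _ _ hR hS φ.onE_symm_onE⟩

end Multigraph

open Multigraph

/-- Non-redundant rooted multigraphs have rooted-isomorphic unfolding
trees iff they are rooted-isomorphic. -/
theorem statement8 (G : Multigraph) (S : G.V) (H : Multigraph) (R : H.V)
    (hS : IsRoot G S) (hR : IsRoot H R)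
    (hGnr : NonRedundant G) (hHnr : NonRedundant H) :
    RootedIso (unfoldTree G S) (nilWalk G S) (unfoldTree H R) (nilWalk H R) ↔
      RootedIso G S H R :=
  ⟨rootedIso_of_rootedIso_unfoldTree hS hR hGnr hHnr, rootedIso_unfoldTree_of_rootedIso⟩
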